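/- Boundedness of the Poisson operator from the homogeneous Besov space to L^q: for 1 < q < ∞ there is c such that for every f ∈ Ḃ^{−1/q}_q(ℝ^{n−1}), the harmonic extension u(x', x_n) = P_{x_n} f(x') = c_n ∫_{ℝ^{n−1}} x_n (|x'−y'|² + x_n²)^{−n/2} f(y') dy' satisfies ‖u‖_{L^q(ℝⁿ₊)} ≤ c ‖f‖_{Ḃ^{−1/q}_q(ℝ^{n−1})}. -/

import Mathlib

open MeasureTheory Real
open scoped ENNReal

/-- The heat kernel on `ℝᵐ`. -/
noncomputable def heatKernel (m : ℕ) (x : EuclideanSpace ℝ (Fin m)) (t : ℝ) : ℝ :=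
  (4 * π * t) ^ (-(m : ℝ) / 2) * Real.exp (-‖x‖ ^ 2 / (4 * t))

/-- The homogeneous Besov norm `‖f‖_{Ḃ^s_{q,q}(ℝᵐ)}` of negative order `s < 0`,
via the thermic (heat semigroup) characterization
`(∫₀^∞ (t^{-s/2} ‖e^{tΔ}f‖_{L^q})^q dt/t)^{1/q}`. -/
noncomputable def besovNorm (m : ℕ) (s q : ℝ) (f : EuclideanSpace ℝ (Fin m) → ℝ) : ℝ≥0∞ :=
  (∫⁻ t in Set.Ioi (0 : ℝ),
      ENNReal.ofReal (t ^ (-s * q / 2 - 1)) *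
        (eLpNorm (fun x => ∫ y, heatKernel m (x - y) t * f y)
          (ENNReal.ofReal q) volume) ^ q) ^ (1 / q)

/-!
The Poisson kernel is an average of heat kernels (subordination):
`P_t = ∫₀^∞ σ_t(s) h_s ds` with `σ_t(s) = t / (2√π) · s^(-3/2) · exp(-t² / 4s)`, a probability
density in `s`. Hence `u(·, t) = ∫₀^∞ σ_t(s) e^{sΔ}f ds`, and Jensen's inequality gives
`|u(x, t)|^q ≤ ∫₀^∞ σ_t(s) |e^{sΔ}f(x)|^q ds`. Integrating in `x` and `t`, and using
`∫₀^∞ σ_t(s) dt = s^(-1/2) / √π ≤ s^(-1/2)`, yields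
`‖u‖_q^q ≤ ∫₀^∞ s^(-1/2) ‖e^{sΔ}f‖_q^q ds = ‖f‖_{Ḃ^{-1/q}_q}^q`, so `c = 1` works.
-/

open Set

theorem lintegral_mul_rpow_le_of_lintegral_eq_one {α : Type*} [MeasurableSpace α]
    {μ : Measure α} {w g : α → ℝ≥0∞} (hw : Measurable w) (hg : AEMeasurable g μ)
    (hw1 : ∫⁻ a, w a ∂μ = 1) {q : ℝ} (hq : 1 ≤ q) :
    (∫⁻ a, w a * g a ∂μ) ^ q ≤ ∫⁻ a, w a * g a ^ q ∂μ := by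
  have : IsProbabilityMeasure (μ.withDensity w) :=
    ⟨by rw [withDensity_apply _ MeasurableSet.univ, Measure.restrict_univ, hw1]⟩
  have hg' : AEMeasurable g (μ.withDensity w) :=
    hg.mono_ac (withDensity_absolutelyContinuous μ w)
  have jensen := eLpNorm'_le_eLpNorm'_of_exponent_le one_pos hq (μ.withDensity w)
    hg'.aestronglyMeasurable
  simp only [eLpNorm', enorm_eq_self, ENNReal.rpow_one, div_one] at jensen
  have hlhs := lintegral_withDensity_eq_lintegral_mul₀ hw.aemeasurable hg
  have hrhs := lintegral_withDensity_eq_lintegral_mul₀ hw.aemeasurable (hg.pow_const q)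
  simp only [Pi.mul_apply] at hlhs hrhs
  rw [← hlhs, ← hrhs]
  calc (∫⁻ a, g a ∂μ.withDensity w) ^ q
      ≤ ((∫⁻ a, g a ^ q ∂μ.withDensity w) ^ (1 / q)) ^ q := by gcongr
    _ = ∫⁻ a, g a ^ q ∂μ.withDensity w := by
      rw [← ENNReal.rpow_mul, one_div_mul_cancel (by positivity), ENNReal.rpow_one]

theorem integral_mul_eq_zero_of_not_aestronglyMeasurable {α : Type*} [MeasurableSpace α]
    {μ : Measure α} {K f : α → ℝ} (hK : Measurable K) (hK0 : ∀ a, K a ≠ 0)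
    (hf : ¬AEStronglyMeasurable f μ) : ∫ a, K a * f a ∂μ = 0 := by
  refine integral_non_aestronglyMeasurable fun hKf => hf ?_
  refine (hK.inv.aestronglyMeasurable.mul hKf).congr (.of_forall fun a => ?_)
  simp only [Pi.mul_apply, Pi.inv_apply, inv_mul_cancel_left₀ (hK0 a)]

theorem enorm_integral_mul_le_lintegral_enorm_integral_mul {S Y : Type*} [MeasurableSpace S]
    [MeasurableSpace Y] {μ : Measure S} {ν : Measure Y} [SFinite μ] [SFinite ν]
    {k : S → Y → ℝ} {K f : Y → ℝ} (hk : Measurable (Function.uncurry k))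
    (hk0 : ∀ y, 0 ≤ᵐ[μ] fun s => k s y) (hK0 : ∀ y, 0 ≤ K y)
    (hK : ∀ y, ∫⁻ s, ENNReal.ofReal (k s y) ∂μ = ENNReal.ofReal (K y))
    (hf : AEStronglyMeasurable f ν) :
    ‖∫ y, K y * f y ∂ν‖ₑ ≤ ∫⁻ s, ‖∫ y, k s y * f y ∂ν‖ₑ ∂μ := by
  by_cases hKf : Integrable (fun y => K y * f y) ν
  swap
  · simp [integral_undef hKf]
  have hkf : Integrable (Function.uncurry fun s y => k s y * f y) (μ.prod ν) := by
    have hmeas : AEStronglyMeasurable (Function.uncurry fun s y => k s y * f y) (μ.prod ν) :=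
      hk.aestronglyMeasurable.mul hf.comp_snd
    refine ⟨hmeas, ?_⟩
    rw [hasFiniteIntegral_iff_enorm, lintegral_prod_symm _ hmeas.enorm]
    refine (lintegral_congr fun y => ?_).trans_lt hKf.2
    simp only [Function.uncurry_apply_pair, enorm_mul, Real.enorm_eq_ofReal (hK0 y)]
    rw [← hK y, ← lintegral_mul_const' _ _ enorm_ne_top]
    refine lintegral_congr_ae ((hk0 y).mono fun s (hs : 0 ≤ k s y) => ?_)
    simp only [Real.enorm_eq_ofReal hs]
  have hK_eq : ∀ y, ∫ s, k s y ∂μ = K y := fun y => by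
    rw [integral_eq_lintegral_of_nonneg_ae (hk0 y)
      (hk.comp (measurable_id.prodMk measurable_const)).aestronglyMeasurable, hK y,
      ENNReal.toReal_ofReal (hK0 y)]
  calc ‖∫ y, K y * f y ∂ν‖ₑ = ‖∫ s, ∫ y, k s y * f y ∂ν ∂μ‖ₑ := by
        rw [integral_integral_swap hkf]
        simp_rw [integral_mul_const, hK_eq]
    _ ≤ ∫⁻ s, ‖∫ y, k s y * f y ∂ν‖ₑ ∂μ := enorm_integral_le_lintegral_enorm _

theorem eLpNorm_ofReal_rpow_eq_lintegral {α ε : Type*} [MeasurableSpace α] [ENorm ε]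
    {μ : Measure α} (f : α → ε) {q : ℝ} (hq : 0 < q) :
    eLpNorm f (ENNReal.ofReal q) μ ^ q = ∫⁻ a, ‖f a‖ₑ ^ q ∂μ := by
  have := eLpNorm_nnreal_pow_eq_lintegral (f := f) (μ := μ) (p := q.toNNReal) (by simpa using hq)
  rwa [Real.coe_toNNReal _ hq.le] at this

theorem lintegral_ofReal_eq_of_integral_eq {α : Type*} [MeasurableSpace α] {μ : Measure α}
    {f : α → ℝ} {c : ℝ} (hf : 0 ≤ᵐ[μ] f) (hfc : ∫ a, f a ∂μ = c) (hc : c ≠ 0) :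
    ∫⁻ a, ENNReal.ofReal (f a) ∂μ = ENNReal.ofReal c := by
  rw [← ofReal_integral_eq_lintegral_ofReal (Integrable.of_integral_ne_zero (hfc ▸ hc)) hf, hfc]

theorem integral_rpow_mul_exp_neg_div_Ioi {a r : ℝ} (ha : 0 < a) (hr : 0 < r) :
    ∫ s in Ioi 0, s ^ (-a - 1) * exp (-(r / s)) = r ^ (-a) * Gamma a := by
  rw [Real.rpow_neg hr.le, ← Real.inv_rpow hr.le, ← one_div,
    ← Real.integral_rpow_mul_exp_neg_mul_Ioi ha hr,
    ← integral_comp_rpow_Ioi (fun s => s ^ (-a - 1) * exp (-(r / s))) (p := -1) (by norm_num)]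
  refine setIntegral_congr_fun measurableSet_Ioi fun s (hs : 0 < s) => ?_
  rw [smul_eq_mul, abs_neg, abs_one, one_mul, Real.rpow_neg_one, Real.inv_rpow hs.le,
    ← Real.rpow_neg hs.le, ← mul_assoc, ← Real.rpow_add hs, div_inv_eq_mul]
  ring_nf

theorem integral_mul_exp_neg_sq_div_Ioi {b : ℝ} (hb : 0 < b) :
    ∫ t in Ioi 0, t * exp (-(t ^ 2 / b)) = b / 2 := by
  have := integral_rpow_mul_exp_neg_mul_rpow (p := 2) (q := 1) two_pos (by norm_num) (inv_pos.2 hb)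
  norm_num [Real.Gamma_one, Real.rpow_neg_one] at this
  rw [div_eq_mul_one_div, ← this]
  refine setIntegral_congr_fun measurableSet_Ioi fun t _ => ?_
  rw [div_eq_inv_mul]

noncomputable def halfSpacePoissonKernel (m : ℕ) (z : EuclideanSpace ℝ (Fin m)) (t : ℝ) :
    ℝ :=
  Gamma (((m : ℝ) + 1) / 2) / π ^ (((m : ℝ) + 1) / 2) * t *
    (‖z‖ ^ 2 + t ^ 2) ^ (-((m : ℝ) + 1) / 2)

noncomputable def subordinator (t s : ℝ) : ℝ :=
  t / (2 * √π) * s ^ (-3 / 2 : ℝ) * exp (-(t ^ 2 / 4 / s))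

theorem halfSpacePoissonKernel_pos {m : ℕ} (z : EuclideanSpace ℝ (Fin m)) {t : ℝ}
    (ht : 0 < t) : 0 < halfSpacePoissonKernel m z t := by
  have := Real.Gamma_pos_of_pos (by positivity : (0 : ℝ) < ((m : ℝ) + 1) / 2)
  unfold halfSpacePoissonKernel
  positivity

theorem subordinator_nonneg {t s : ℝ} (ht : 0 ≤ t) (hs : 0 < s) : 0 ≤ subordinator t s := by
  unfold subordinator
  positivity

theorem heatKernel_nonneg {m : ℕ} (z : EuclideanSpace ℝ (Fin m)) {s : ℝ} (hs : 0 < s) :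
    0 ≤ heatKernel m z s := by
  unfold heatKernel
  positivity

theorem integral_subordinator_mul_heatKernel (m : ℕ) (z : EuclideanSpace ℝ (Fin m)) {t : ℝ}
    (ht : 0 < t) :
    ∫ s in Ioi 0, subordinator t s * heatKernel m z s = halfSpacePoissonKernel m z t := by
  set a : ℝ := ((m : ℝ) + 1) / 2
  set R : ℝ := ‖z‖ ^ 2 + t ^ 2
  have hR : 0 < R := by positivity
  have hintegrand : ∀ s ∈ Ioi (0 : ℝ), subordinator t s * heatKernel m z s =
      t / (2 * √π) * (4 * π) ^ (-(m : ℝ) / 2) * (s ^ (-a - 1) * exp (-(R / 4 / s))) := by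
    intro s (hs : 0 < s)
    rw [subordinator, heatKernel, Real.mul_rpow (by positivity) hs.le,
      show -a - 1 = -3 / 2 + -(m : ℝ) / 2 by ring, Real.rpow_add hs,
      show -(R / 4 / s) = -(t ^ 2 / 4 / s) + -‖z‖ ^ 2 / (4 * s) by ring, Real.exp_add]
    ring
  have hconst :
      (4 * π) ^ (-(m : ℝ) / 2) * (R / 4) ^ (-a) = 2 * √π * (π ^ (-a) * R ^ (-a)) := by
    rw [show -(m : ℝ) / 2 = 1 / 2 + -a by ring, Real.rpow_add (by positivity), mul_assoc,
      ← Real.mul_rpow (by positivity) (by positivity), show 4 * π * (R / 4) = π * R by ring,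
      Real.mul_rpow pi_pos.le hR.le, ← Real.sqrt_eq_rpow, Real.sqrt_mul (by norm_num),
      show √4 = 2 by rw [show (4 : ℝ) = 2 ^ 2 by norm_num, Real.sqrt_sq two_pos.le]]
  rw [setIntegral_congr_fun measurableSet_Ioi hintegrand, integral_const_mul,
    integral_rpow_mul_exp_neg_div_Ioi (by positivity) (by positivity), halfSpacePoissonKernel,
    show -((m : ℝ) + 1) / 2 = -a by ring, div_eq_mul_inv (Gamma a), ← Real.rpow_neg pi_pos.le]
  have : √π ≠ 0 := by positivity
  calc t / (2 * √π) * (4 * π) ^ (-(m : ℝ) / 2) * ((R / 4) ^ (-a) * Gamma a)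
      = t / (2 * √π) * ((4 * π) ^ (-(m : ℝ) / 2) * (R / 4) ^ (-a)) * Gamma a := by ring
    _ = Gamma a * π ^ (-a) * t * R ^ (-a) := by rw [hconst]; field_simp

theorem lintegral_subordinator_mul_heatKernel (m : ℕ) (z : EuclideanSpace ℝ (Fin m)) {t : ℝ}
    (ht : 0 < t) :
    ∫⁻ s in Ioi 0, ENNReal.ofReal (subordinator t s * heatKernel m z s) =
      ENNReal.ofReal (halfSpacePoissonKernel m z t) :=
  lintegral_ofReal_eq_of_integral_eq
    ((ae_restrict_iff' measurableSet_Ioi).2 (.of_forall fun _ hs =>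
      mul_nonneg (subordinator_nonneg ht.le hs) (heatKernel_nonneg z hs)))
    (integral_subordinator_mul_heatKernel m z ht) (halfSpacePoissonKernel_pos z ht).ne'

theorem lintegral_subordinator_ds {t : ℝ} (ht : 0 < t) :
    ∫⁻ s in Ioi 0, ENNReal.ofReal (subordinator t s) = 1 := by
  rw [← ENNReal.ofReal_one]
  refine lintegral_ofReal_eq_of_integral_eq
    ((ae_restrict_iff' measurableSet_Ioi).2 (.of_forall fun _ hs =>
      subordinator_nonneg ht.le hs))
    ?_ one_ne_zero
  have hintegrand : ∀ s ∈ Ioi (0 : ℝ), subordinator t s =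
      t / (2 * √π) * (s ^ (-(1 / 2 : ℝ) - 1) * exp (-(t ^ 2 / 4 / s))) := by
    intro s _
    rw [subordinator, show -(1 / 2 : ℝ) - 1 = -3 / 2 by norm_num]; ring
  rw [setIntegral_congr_fun measurableSet_Ioi hintegrand, integral_const_mul,
    integral_rpow_mul_exp_neg_div_Ioi (by norm_num) (by positivity), Real.Gamma_one_half_eq,
    Real.rpow_neg (by positivity), ← Real.sqrt_eq_rpow, Real.sqrt_div' _ (by norm_num),
    Real.sqrt_sq ht.le,
    show √4 = 2 by rw [show (4 : ℝ) = 2 ^ 2 by norm_num, Real.sqrt_sq two_pos.le]]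
  have : √π ≠ 0 := by positivity
  field_simp

theorem lintegral_subordinator_dt {s : ℝ} (hs : 0 < s) :
    ∫⁻ t in Ioi 0, ENNReal.ofReal (subordinator t s) =
      ENNReal.ofReal (s ^ (-1 / 2 : ℝ) / √π) := by
  refine lintegral_ofReal_eq_of_integral_eq
    ((ae_restrict_iff' measurableSet_Ioi).2 (.of_forall fun _ ht =>
      subordinator_nonneg (le_of_lt ht) hs))
    ?_ (by positivity)
  have hintegrand : ∀ t ∈ Ioi (0 : ℝ), subordinator t s =
      s ^ (-3 / 2 : ℝ) / (2 * √π) * (t * exp (-(t ^ 2 / (4 * s)))) := by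
    intro t _
    rw [subordinator, div_div]; ring
  rw [setIntegral_congr_fun measurableSet_Ioi hintegrand, integral_const_mul,
    integral_mul_exp_neg_sq_div_Ioi (by positivity),
    show (-1 / 2 : ℝ) = -3 / 2 + 1 by norm_num, Real.rpow_add hs, Real.rpow_one]
  have : √π ≠ 0 := by positivity
  field_simp
  ring

noncomputable def heatExtension (m : ℕ) (f : EuclideanSpace ℝ (Fin m) → ℝ)
    (x : EuclideanSpace ℝ (Fin m)) (s : ℝ) : ℝ :=
  ∫ y, heatKernel m (x - y) s * f y

noncomputable def poissonExtension (m : ℕ) (f : EuclideanSpace ℝ (Fin m) → ℝ)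
    (x : EuclideanSpace ℝ (Fin m)) (t : ℝ) : ℝ :=
  ∫ y, halfSpacePoissonKernel m (x - y) t * f y

theorem measurable_subordinator : Measurable (Function.uncurry subordinator) := by
  unfold subordinator; fun_prop

section Extensions

variable {m : ℕ}

theorem measurable_heatKernel :
    Measurable (Function.uncurry (heatKernel m)) := by
  unfold heatKernel; fun_prop

theorem measurable_halfSpacePoissonKernel :
    Measurable (Function.uncurry (halfSpacePoissonKernel m)) := by
  unfold halfSpacePoissonKernel; fun_prop

theorem aestronglyMeasurable_heatExtension_comp {α : Type*} [MeasurableSpace α] {ρ : Measure α}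
    {f : EuclideanSpace ℝ (Fin m) → ℝ} (hf : AEStronglyMeasurable f volume)
    {X : α → EuclideanSpace ℝ (Fin m)} {T : α → ℝ} (hX : Measurable X)
    (hT : Measurable T) :
    AEStronglyMeasurable (fun a => heatExtension m f (X a) (T a)) ρ := by
  have hkernel : Measurable fun p : α × EuclideanSpace ℝ (Fin m) =>
      heatKernel m (X p.1 - p.2) (T p.1) :=
    measurable_heatKernel.comp
      (((hX.comp measurable_fst).sub measurable_snd).prodMk (hT.comp measurable_fst))
  exact (hkernel.aestronglyMeasurable.mul hf.comp_snd).integral_prod_right'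

theorem enorm_poissonExtension_rpow_le {f : EuclideanSpace ℝ (Fin m) → ℝ}
    (hf : AEStronglyMeasurable f volume) {q : ℝ} (hq : 1 ≤ q) (x : EuclideanSpace ℝ (Fin m))
    {t : ℝ} (ht : 0 < t) :
    ‖poissonExtension m f x t‖ₑ ^ q ≤
      ∫⁻ s in Ioi 0,
        ENNReal.ofReal (subordinator t s) * ‖heatExtension m f x s‖ₑ ^ q := by
  have hsubordination : ‖poissonExtension m f x t‖ₑ ≤
      ∫⁻ s in Ioi 0, ENNReal.ofReal (subordinator t s) * ‖heatExtension m f x s‖ₑ := by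
    refine (enorm_integral_mul_le_lintegral_enorm_integral_mul
      (k := fun s y => subordinator t s * heatKernel m (x - y) s) ?_ ?_
      (fun y => (halfSpacePoissonKernel_pos _ ht).le)
      (fun y => lintegral_subordinator_mul_heatKernel m (x - y) ht) hf).trans_eq ?_
    · exact (measurable_subordinator.comp (measurable_const.prodMk measurable_fst)).mul
        (measurable_heatKernel.comp ((measurable_const.sub measurable_snd).prodMk measurable_fst))
    · exact fun y => (ae_restrict_iff' measurableSet_Ioi).2 (.of_forall fun s hs =>
        mul_nonneg (subordinator_nonneg ht.le hs) (heatKernel_nonneg _ hs))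
    · refine setLIntegral_congr_fun measurableSet_Ioi fun s hs => ?_
      simp only [mul_assoc, integral_const_mul, enorm_mul,
        Real.enorm_eq_ofReal (subordinator_nonneg ht.le hs)]
      rfl
  calc ‖poissonExtension m f x t‖ₑ ^ q
      ≤ (∫⁻ s in Ioi 0,
          ENNReal.ofReal (subordinator t s) * ‖heatExtension m f x s‖ₑ) ^ q := by
        gcongr
    _ ≤ ∫⁻ s in Ioi 0,
          ENNReal.ofReal (subordinator t s) * ‖heatExtension m f x s‖ₑ ^ q :=
        lintegral_mul_rpow_le_of_lintegral_eq_one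
          (ENNReal.measurable_ofReal.comp
            (measurable_subordinator.comp (measurable_const.prodMk measurable_id)))
          (aestronglyMeasurable_heatExtension_comp hf measurable_const measurable_id).enorm
          (lintegral_subordinator_ds ht) hq

theorem lintegral_enorm_poissonExtension_rpow_le {f : EuclideanSpace ℝ (Fin m) → ℝ}
    (hf : AEStronglyMeasurable f volume) {q : ℝ} (hq : 1 ≤ q) :
    ∫⁻ p, ‖poissonExtension m f p.1 p.2‖ₑ ^ q ∂volume.prod (volume.restrict (Ioi 0)) ≤
      ∫⁻ s in Ioi 0,
        ENNReal.ofReal (s ^ (-1 / 2 : ℝ)) * ∫⁻ x, ‖heatExtension m f x s‖ₑ ^ q := by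
  calc ∫⁻ p, ‖poissonExtension m f p.1 p.2‖ₑ ^ q ∂volume.prod (volume.restrict (Ioi 0))
      ≤ ∫⁻ x, ∫⁻ t in Ioi 0, ‖poissonExtension m f x t‖ₑ ^ q := lintegral_prod_le _
    _ ≤ ∫⁻ x, ∫⁻ t in Ioi 0, ∫⁻ s in Ioi 0,
          ENNReal.ofReal (subordinator t s) * ‖heatExtension m f x s‖ₑ ^ q :=
        lintegral_mono fun x => setLIntegral_mono' measurableSet_Ioi fun t ht =>
          enorm_poissonExtension_rpow_le hf hq x ht
    _ = ∫⁻ x, ∫⁻ s in Ioi 0,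
          ENNReal.ofReal (s ^ (-1 / 2 : ℝ) / √π) * ‖heatExtension m f x s‖ₑ ^ q := by
        refine lintegral_congr fun x => ?_
        rw [lintegral_lintegral_swap
          ((ENNReal.measurable_ofReal.comp measurable_subordinator).aemeasurable.mul
            ((aestronglyMeasurable_heatExtension_comp hf measurable_const
              measurable_snd).enorm.pow_const q))]
        refine setLIntegral_congr_fun measurableSet_Ioi fun s hs => ?_
        have hσ : Measurable fun t => ENNReal.ofReal (subordinator t s) :=
          ENNReal.measurable_ofReal.comp (measurable_subordinator.comp
            (measurable_id.prodMk measurable_const))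
        rw [lintegral_mul_const _ hσ, lintegral_subordinator_dt hs]
    _ ≤ ∫⁻ x, ∫⁻ s in Ioi 0,
          ENNReal.ofReal (s ^ (-1 / 2 : ℝ)) * ‖heatExtension m f x s‖ₑ ^ q := by
        refine lintegral_mono fun x =>
          setLIntegral_mono' measurableSet_Ioi fun s (hs : 0 < s) => ?_
        gcongr
        exact div_le_self (by positivity) (Real.one_le_sqrt.2 (by linarith [pi_gt_three]))
    _ = ∫⁻ s in Ioi 0, ENNReal.ofReal (s ^ (-1 / 2 : ℝ)) *
          ∫⁻ x, ‖heatExtension m f x s‖ₑ ^ q := by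
        rw [lintegral_lintegral_swap
          ((ENNReal.measurable_ofReal.comp (by fun_prop : Measurable fun p :
              EuclideanSpace ℝ (Fin m) × ℝ => p.2 ^ (-1 / 2 : ℝ))).aemeasurable.mul
            ((aestronglyMeasurable_heatExtension_comp hf measurable_fst
              measurable_snd).enorm.pow_const q))]
        exact lintegral_congr fun s => lintegral_const_mul'' _
          ((aestronglyMeasurable_heatExtension_comp hf measurable_id
            measurable_const).enorm.pow_const q)

theorem eLpNorm_poissonExtension_le_besovNorm {q : ℝ} (hq : 1 ≤ q)
    (f : EuclideanSpace ℝ (Fin m) → ℝ) :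
    eLpNorm (fun p => poissonExtension m f p.1 p.2) (ENNReal.ofReal q)
        (volume.prod (volume.restrict (Ioi 0))) ≤ besovNorm m (-1 / q) q f := by
  have hq0 : 0 < q := by linarith
  by_cases hf : AEStronglyMeasurable f volume
  · rw [← ENNReal.rpow_le_rpow_iff hq0, eLpNorm_ofReal_rpow_eq_lintegral _ hq0, besovNorm,
      ← ENNReal.rpow_mul, one_div_mul_cancel hq0.ne', ENNReal.rpow_one,
      show -(-1 / q) * q / 2 - 1 = -1 / 2 by field_simp; ring]
    refine (lintegral_enorm_poissonExtension_rpow_le hf hq).trans_eq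
      (setLIntegral_congr_fun measurableSet_Ioi fun s _ => ?_)
    rw [eLpNorm_ofReal_rpow_eq_lintegral _ hq0]
    rfl
  · -- For such `f` the Bochner integrals defining `u(·, t)`, `t > 0`, are `0` by convention.
    have hzero : (fun p => poissonExtension m f p.1 p.2)
        =ᵐ[volume.prod (volume.restrict (Ioi 0))] 0 :=
      (Measure.quasiMeasurePreserving_snd.ae (ae_restrict_mem measurableSet_Ioi)).mono
        fun p (hp : 0 < p.2) => integral_mul_eq_zero_of_not_aestronglyMeasurable
          (measurable_halfSpacePoissonKernel.comp
            ((measurable_const.sub measurable_id).prodMk measurable_const))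
          (fun y => (halfSpacePoissonKernel_pos _ hp).ne') hf
    simp [eLpNorm_congr_ae hzero]

end Extensions

theorem poisson_operator_besov_bound_general (m : ℕ) (q : ℝ) (hq : 1 < q) :
    ∃ c : ℝ, 0 < c ∧ ∀ f : EuclideanSpace ℝ (Fin m) → ℝ,
      eLpNorm (fun p : EuclideanSpace ℝ (Fin m) × ℝ =>
          ∫ y' : EuclideanSpace ℝ (Fin m),
            (Real.Gamma (((m : ℝ) + 1) / 2) / Real.pi ^ (((m : ℝ) + 1) / 2)) *
              p.2 * (‖p.1 - y'‖ ^ 2 + p.2 ^ 2) ^ (-((m : ℝ) + 1) / 2) * f y')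
        (ENNReal.ofReal q)
        ((volume : Measure (EuclideanSpace ℝ (Fin m))).prod
          ((volume : Measure ℝ).restrict (Set.Ioi 0)))
      ≤ ENNReal.ofReal c * besovNorm m (-1 / q) q f :=
  ⟨1, one_pos, fun f => by
    rw [ENNReal.ofReal_one, one_mul]
    exact eLpNorm_poissonExtension_le_besovNorm hq.le f⟩

/-- Boundedness of the Poisson operator from `Ḃ^{-1/q}_q(ℝ^{n-1})` to `L^q(ℝⁿ₊)`:
the harmonic extension `u(x',x_n) = c_n ∫ x_n (|x'-y'|² + x_n²)^{-n/2} f(y') dy'`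
satisfies `‖u‖_{L^q(ℝⁿ₊)} ≤ c ‖f‖_{Ḃ^{-1/q}_q(ℝ^{n-1})}`. -/
theorem poisson_operator_besov_bound (m : ℕ) (hm : 1 ≤ m) (q : ℝ) (hq : 1 < q) :
    ∃ c : ℝ, 0 < c ∧ ∀ f : EuclideanSpace ℝ (Fin m) → ℝ,
      eLpNorm (fun p : EuclideanSpace ℝ (Fin m) × ℝ =>
          ∫ y' : EuclideanSpace ℝ (Fin m),
            (Real.Gamma (((m : ℝ) + 1) / 2) / Real.pi ^ (((m : ℝ) + 1) / 2)) *
              p.2 * (‖p.1 - y'‖ ^ 2 + p.2 ^ 2) ^ (-((m : ℝ) + 1) / 2) * f y')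
        (ENNReal.ofReal q)
        ((volume : Measure (EuclideanSpace ℝ (Fin m))).prod
          ((volume : Measure ℝ).restrict (Set.Ioi 0)))
      ≤ ENNReal.ofReal c * besovNorm m (-1 / q) q f :=
  poisson_operator_besov_bound_general m q hq
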